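/- arXiv:2408.16980 — 9 statements merged into one kernel-verified Lean document; each statement's English description precedes it below -/
import Mathlib

section
/- Define f(a1,a2,a13,z) = z*(a2 + a2*a13) + a2 + a1*a2 + a1*a13 + a2*a13 in F2, and maps F : F2^4 → F2^5 by F(a1,a2,a13,z) = (a1, a2, a13, z + f(a1,a2,a13,z), f(a1,a2,a13,z)) and G : F2^5 → F2^4 by G(a1,a2,a13,a23,b1) = (a1, a2, a13, a23 + b1). Then F maps F2^4 bijectively onto the set V = {(a1,a2,a13,a23,b1) ∈ F2^5 : a1*a2 + a1*a13 + a2*a13*a23 + a2*a13*b1 + a2*a13 + a2*a23 + a2*b1 + a2 + b1 = 0}, G restricted to V is its inverse, G∘F = id on F2^4, and F∘G = id on V. -/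
def symRel (a1 a2 a13 a23 b1 : ZMod 2) : ZMod 2 :=
  a1 * a2 + a1 * a13 + a2 * a13 * a23 + a2 * a13 * b1 + a2 * a13 + a2 * a23 + a2 * b1 + a2 + b1

/-- The variety of symmetric `Sq^8` actions on `A(2)`. -/
def symV : Set (ZMod 2 × ZMod 2 × ZMod 2 × ZMod 2 × ZMod 2) :=
  {p | symRel p.1 p.2.1 p.2.2.1 p.2.2.2.1 p.2.2.2.2 = 0}

def fPoly (a1 a2 a13 z : ZMod 2) : ZMod 2 :=
  z * (a2 + a2 * a13) + a2 + a1 * a2 + a1 * a13 + a2 * a13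

def Fmap (q : ZMod 2 × ZMod 2 × ZMod 2 × ZMod 2) :
    ZMod 2 × ZMod 2 × ZMod 2 × ZMod 2 × ZMod 2 :=
  (q.1, q.2.1, q.2.2.1, q.2.2.2 + fPoly q.1 q.2.1 q.2.2.1 q.2.2.2,
    fPoly q.1 q.2.1 q.2.2.1 q.2.2.2)

def Gmap (p : ZMod 2 × ZMod 2 × ZMod 2 × ZMod 2 × ZMod 2) :
    ZMod 2 × ZMod 2 × ZMod 2 × ZMod 2 :=
  (p.1, p.2.1, p.2.2.1, p.2.2.2.1 + p.2.2.2.2)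

theorem symmetric_Sq8_variety_is_affine_space :
    Set.BijOn Fmap Set.univ symV ∧
    (∀ q, Gmap (Fmap q) = q) ∧
    (∀ p ∈ symV, Fmap (Gmap p) = p) := by
  have hGF : ∀ q, Gmap (Fmap q) = q := by decide
  have hmem : ∀ q, Fmap q ∈ symV := by
    intro q
    show symRel _ _ _ _ _ = 0
    revert q; decide
  have hFG : ∀ p ∈ symV, Fmap (Gmap p) = p := by
    intro p hp
    have h0 : symRel p.1 p.2.1 p.2.2.1 p.2.2.2.1 p.2.2.2.2 = 0 := hp
    clear hp
    revert h0; revert p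
    exact (by decide : ∀ p : ZMod 2 × ZMod 2 × ZMod 2 × ZMod 2 × ZMod 2,
      symRel p.1 p.2.1 p.2.2.1 p.2.2.2.1 p.2.2.2.2 = 0 → Fmap (Gmap p) = p)
  refine ⟨⟨fun q _ => hmem q, fun a _ b _ h => ?_, fun p hp => ⟨Gmap p, trivial, hFG p hp⟩⟩, hGF, hFG⟩
  rw [← hGF a, ← hGF b, h]
end

section
/- The number of tuples (a1, a2, a3, a21, a47, a48, a60, a61, a62) in F2^9 satisfying simultaneously r1 = 0, r2 = 0 and r3 = 0 is exactly 100, where r1 = a1*a21 + a1*a60 + a1*a62 + a2*a3*a21*a60*a62 + a2*a3*a21*a60 + a2*a3*a21 + a2*a3*a60 + a2*a3*a62 + a2*a3 + a2*a21*a47*a60 + a2*a21*a47*a62 + a2*a21*a47 + a2*a21*a48*a60 + a2*a21*a48*a62 + a2*a21*a60 + a2*a48 + a2 + a3*a21*a60*a62 + a3*a21 + a3*a60*a62 + a3*a60 + a21*a47*a60 + a21*a47*a62 + a21*a48*a60 + a21*a48*a62 + a21*a62 + a21 + a47*a60 + a47*a62 + a48*a60 + a48*a62 + a48 + a62 + 1,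 r2 = a1*a2*a21*a60 + a1*a2*a60*a62 + a1*a21 + a1*a60*a62 + a1*a60 + a1*a62 + a2*a3*a21*a60*a62 + a2*a3*a60*a62 + a2*a21*a47*a60 + a2*a21*a48*a60 + a2*a21*a60*a62 + a2*a47*a60*a62 + a2*a47*a60 + a2*a47 + a2*a48*a60*a62 + a2*a61 + a3*a21*a60*a62 + a21*a47*a60 + a21*a48*a60 + a21*a60*a62 + a21*a61 + a47*a60*a62 + a47*a60 + a47*a62 + a48*a60*a62 + a48*a60 + a60*a61 + a60*a62, and r3 = a1*a2*a21*a60 + a1*a2*a21*a62 + a1*a2*a60 + a1*a2*a62 + a1*a2 + a1*a21 + a2*a3*a21*a60 + a2*a3*a21 + a2*a3*a60*a62 + a2*a21*a48 + a2*a21*a62 + a2*a21 + a2*a48*a60 + a2*a48*a62 + a2*a60*a62 + a2*a62 + a2 + a3*a60 + a3*a62 + a3. -/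
/-- First defining relation for the variety of `Sq^8` actions on `A(2)`. -/
def r1 (a1 a2 a3 a21 a47 a48 a60 a61 a62 : ZMod 2) : ZMod 2 :=
  a1*a21 + a1*a60 + a1*a62 + a2*a3*a21*a60*a62 + a2*a3*a21*a60 + a2*a3*a21 +
  a2*a3*a60 + a2*a3*a62 + a2*a3 + a2*a21*a47*a60 + a2*a21*a47*a62 + a2*a21*a47 +
  a2*a21*a48*a60 + a2*a21*a48*a62 + a2*a21*a60 + a2*a48 + a2 + a3*a21*a60*a62 +
  a3*a21 + a3*a60*a62 + a3*a60 + a21*a47*a60 + a21*a47*a62 + a21*a48*a60 +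
  a21*a48*a62 + a21*a62 + a21 + a47*a60 + a47*a62 + a48*a60 + a48*a62 + a48 + a62 + 1

/-- Second defining relation for the variety of `Sq^8` actions on `A(2)`. -/
def r2 (a1 a2 a3 a21 a47 a48 a60 a61 a62 : ZMod 2) : ZMod 2 :=
  a1*a2*a21*a60 + a1*a2*a60*a62 + a1*a21 + a1*a60*a62 + a1*a60 + a1*a62 +
  a2*a3*a21*a60*a62 + a2*a3*a60*a62 + a2*a21*a47*a60 + a2*a21*a48*a60 +
  a2*a21*a60*a62 + a2*a47*a60*a62 + a2*a47*a60 + a2*a47 + a2*a48*a60*a62 +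
  a2*a61 + a3*a21*a60*a62 + a21*a47*a60 + a21*a48*a60 + a21*a60*a62 + a21*a61 +
  a47*a60*a62 + a47*a60 + a47*a62 + a48*a60*a62 + a48*a60 + a60*a61 + a60*a62

/-- Third defining relation for the variety of `Sq^8` actions on `A(2)`. -/
def r3 (a1 a2 a3 a21 a47 a48 a60 a61 a62 : ZMod 2) : ZMod 2 :=
  a1*a2*a21*a60 + a1*a2*a21*a62 + a1*a2*a60 + a1*a2*a62 + a1*a2 + a1*a21 +
  a2*a3*a21*a60 + a2*a3*a21 + a2*a3*a60*a62 + a2*a21*a48 + a2*a21*a62 + a2*a21 +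
  a2*a48*a60 + a2*a48*a62 + a2*a60*a62 + a2*a62 + a2 + a3*a60 + a3*a62 + a3

set_option maxRecDepth 100000 in
/-- Coordinates: `v 0, ..., v 8` are `a1, a2, a3, a21, a47, a48, a60, a61, a62`. -/
theorem card_general_Sq8_actions :
    Nat.card {v : Fin 9 → ZMod 2 //
      r1 (v 0) (v 1) (v 2) (v 3) (v 4) (v 5) (v 6) (v 7) (v 8) = 0 ∧
      r2 (v 0) (v 1) (v 2) (v 3) (v 4) (v 5) (v 6) (v 7) (v 8) = 0 ∧
      r3 (v 0) (v 1) (v 2) (v 3) (v 4) (v 5) (v 6) (v 7) (v 8) = 0} = 100 := by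
  rw [Nat.card_eq_fintype_card]
  decide
end

section
/- The number of tuples (a1, a2, a3, a21, a47, a48, a60, a61, a62, b1, b2, b3, b4) in F2^13 satisfying r1 = r2 = r3 = 0 (where r1, r2, r3 are the three polynomials in the first nine variables defining the variety of Sq^8 actions on A(2)) equals 1600. -/
set_option maxRecDepth 100000 in
set_option maxHeartbeats 1000000 in
lemma card_aux9 : Fintype.card {w : Fin 9 → ZMod 2 //
      r1 (w 0) (w 1) (w 2) (w 3) (w 4) (w 5) (w 6) (w 7) (w 8) = 0 ∧
      r2 (w 0) (w 1) (w 2) (w 3) (w 4) (w 5) (w 6) (w 7) (w 8) = 0 ∧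
      r3 (w 0) (w 1) (w 2) (w 3) (w 4) (w 5) (w 6) (w 7) (w 8) = 0} = 100 := by decide

/-- Coordinates: `v 0, ..., v 8` are `a1, a2, a3, a21, a47, a48, a60, a61, a62`, and
`v 9, ..., v 12` are `b1, b2, b3, b4` (unconstrained). -/
theorem card_general_A_module_structures :
    Nat.card {v : Fin 13 → ZMod 2 //
      r1 (v 0) (v 1) (v 2) (v 3) (v 4) (v 5) (v 6) (v 7) (v 8) = 0 ∧
      r2 (v 0) (v 1) (v 2) (v 3) (v 4) (v 5) (v 6) (v 7) (v 8) = 0 ∧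
      r3 (v 0) (v 1) (v 2) (v 3) (v 4) (v 5) (v 6) (v 7) (v 8) = 0} = 1600 := by
  have e : {v : Fin 13 → ZMod 2 //
      r1 (v 0) (v 1) (v 2) (v 3) (v 4) (v 5) (v 6) (v 7) (v 8) = 0 ∧
      r2 (v 0) (v 1) (v 2) (v 3) (v 4) (v 5) (v 6) (v 7) (v 8) = 0 ∧
      r3 (v 0) (v 1) (v 2) (v 3) (v 4) (v 5) (v 6) (v 7) (v 8) = 0} ≃
      {w : Fin 9 → ZMod 2 //
      r1 (w 0) (w 1) (w 2) (w 3) (w 4) (w 5) (w 6) (w 7) (w 8) = 0 ∧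
      r2 (w 0) (w 1) (w 2) (w 3) (w 4) (w 5) (w 6) (w 7) (w 8) = 0 ∧
      r3 (w 0) (w 1) (w 2) (w 3) (w 4) (w 5) (w 6) (w 7) (w 8) = 0} × (Fin 4 → ZMod 2) :=
    (Equiv.subtypeEquiv
      (q := fun p : (Fin 9 → ZMod 2) × (Fin 4 → ZMod 2) =>
        r1 (p.1 0) (p.1 1) (p.1 2) (p.1 3) (p.1 4) (p.1 5) (p.1 6) (p.1 7) (p.1 8) = 0 ∧
        r2 (p.1 0) (p.1 1) (p.1 2) (p.1 3) (p.1 4) (p.1 5) (p.1 6) (p.1 7) (p.1 8) = 0 ∧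
        r3 (p.1 0) (p.1 1) (p.1 2) (p.1 3) (p.1 4) (p.1 5) (p.1 6) (p.1 7) (p.1 8) = 0)
      (Fin.appendEquiv (α := ZMod 2) 9 4).symm
      (fun v => Iff.rfl)).trans (Equiv.prodSubtypeFstEquivSubtypeProd
      (p := fun w : Fin 9 → ZMod 2 =>
        r1 (w 0) (w 1) (w 2) (w 3) (w 4) (w 5) (w 6) (w 7) (w 8) = 0 ∧
        r2 (w 0) (w 1) (w 2) (w 3) (w 4) (w 5) (w 6) (w 7) (w 8) = 0 ∧
        r3 (w 0) (w 1) (w 2) (w 3) (w 4) (w 5) (w 6) (w 7) (w 8) = 0))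
  rw [Nat.card_congr e, Nat.card_prod, Nat.card_eq_fintype_card, card_aux9,
    Nat.card_eq_fintype_card]
  simp
end

section
/- Let V = {(a1,a2,a13,a23,b1) ∈ F2^5 : a1*a2 + a1*a13 + a2*a13*a23 + a2*a13*b1 + a2*a13 + a2*a23 + a2*b1 + a2 + b1 = 0} and let π : V → F2^4 be the projection forgetting b1. Then: (i) the image of π is F2^4 minus the two points (0,1,0,0) and (1,1,0,1); (ii) the fibers of π over (0,1,0,1) and (1,1,0,0) each have exactly two elements; (iii) the fiber over every other point of the image has exactly one element. -/
/-- The projection forgetting the last coordinate `b1`. -/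
def projB (p : ZMod 2 × ZMod 2 × ZMod 2 × ZMod 2 × ZMod 2) :
    ZMod 2 × ZMod 2 × ZMod 2 × ZMod 2 :=
  (p.1, p.2.1, p.2.2.1, p.2.2.2.1)

instance symV.decMem : DecidablePred (· ∈ symV) := fun _ =>
  inferInstanceAs (Decidable (_ = _))

lemma fiber_ncard (q : ZMod 2 × ZMod 2 × ZMod 2 × ZMod 2) :
    Set.ncard {p ∈ symV | projB p = q} =
      ({p ∈ Finset.univ | p ∈ symV ∧ projB p = q} :
        Finset (ZMod 2 × ZMod 2 × ZMod 2 × ZMod 2 × ZMod 2)).card := by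
  rw [← Set.ncard_coe_finset]
  congr 1
  ext p; simp [Set.mem_setOf_eq]

theorem lifts_of_Sq8_actions_on_B2 :
    (projB '' symV = Set.univ \ {((0 : ZMod 2), (1 : ZMod 2), (0 : ZMod 2), (0 : ZMod 2)),
        ((1 : ZMod 2), (1 : ZMod 2), (0 : ZMod 2), (1 : ZMod 2))}) ∧
    Set.ncard {p ∈ symV | projB p = ((0 : ZMod 2), 1, 0, 1)} = 2 ∧
    Set.ncard {p ∈ symV | projB p = ((1 : ZMod 2), 1, 0, 0)} = 2 ∧
    (∀ q ∈ projB '' symV, q ≠ ((0 : ZMod 2), 1, 0, 1) → q ≠ ((1 : ZMod 2), 1, 0, 0) →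
      Set.ncard {p ∈ symV | projB p = q} = 1) := by
  have hz : ∀ x : ZMod 2, x = 0 ∨ x = 1 := by decide
  refine ⟨?_, ?_, ?_, ?_⟩
  · ext q
    simp only [Set.mem_image, Set.mem_diff, Set.mem_univ, Set.mem_insert_iff,
      Set.mem_singleton_iff, true_and, symV, projB, Set.mem_setOf_eq]
    revert q; decide
  · rw [fiber_ncard]; decide
  · rw [fiber_ncard]; decide
  · rintro ⟨x1, x2, x3, x4⟩ hq h1 h2
    rcases hz x1 with rfl | rfl <;> rcases hz x2 with rfl | rfl <;>
      rcases hz x3 with rfl | rfl <;> rcases hz x4 with rfl | rfl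
    all_goals first
      | exact absurd rfl h1
      | exact absurd rfl h2
      | (rw [fiber_ncard]; decide)
      | (exfalso
         simp only [Set.mem_image] at hq
         obtain ⟨p, hp, hpe⟩ := hq
         revert hpe; revert hp; revert p
         decide)
end

section
/- For every (a1, a2, a13, a23, b1) in F2^5 satisfying a1*a2 + a1*a13 + a2*a13*a23 + a2*a13*b1 + a2*a13 + a2*a23 + a2*b1 + a2 + b1 = 0, the nine-tuple (A1, A2, A3, A21, A47, A48, A60, A61, A62) := (a1, a2, b1, a13, a23, a1*a2*a13 + a1*a13 + a2*a13*b1 + a2 + a13*b1 + a13 + 1, 0, a1, a2) satisfies all three polynomial relations r1 = r2 = r3 = 0 defining the variety of Sq^8 actions on A(2). -/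
/-- Every symmetric `Sq^8` action gives a point of the variety of all `Sq^8` actions,
via `(a1, a2, a3, a21, a47, a48, a60, a61, a62) =
(a1, a2, b1, a13, a23, a1*a2*a13 + a1*a13 + a2*a13*b1 + a2 + a13*b1 + a13 + 1, 0, a1, a2)`. -/
theorem symmetric_embeds_in_general :
    ∀ a1 a2 a13 a23 b1 : ZMod 2, symRel a1 a2 a13 a23 b1 = 0 →
      r1 a1 a2 b1 a13 a23
        (a1*a2*a13 + a1*a13 + a2*a13*b1 + a2 + a13*b1 + a13 + 1) 0 a1 a2 = 0 ∧
      r2 a1 a2 b1 a13 a23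
        (a1*a2*a13 + a1*a13 + a2*a13*b1 + a2 + a13*b1 + a13 + 1) 0 a1 a2 = 0 ∧
      r3 a1 a2 b1 a13 a23
        (a1*a2*a13 + a1*a13 + a2*a13*b1 + a2 + a13*b1 + a13 + 1) 0 a1 a2 = 0 := by
  decide
end

section
/- Define D : F2^5 → F2^5 by D(a1, a2, a13, a23, c1) = (a23 + 1, a13 + 1, a2 + 1, a1 + 1, c1 + a13 + a1*a13 + a23 + a2*a23). Then D is an involution (D∘D = id), and D has exactly 8 fixed points, namely precisely the tuples with a13 = a2 + 1 and a23 = a1 + 1 (and c1 arbitrary). -/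
/-- The duality map on the variety `V_B = F2^5` of `A`-module structures on `B(2)`,
with coordinates `(a1, a2, a13, a23, c1)`. -/
def DB (p : ZMod 2 × ZMod 2 × ZMod 2 × ZMod 2 × ZMod 2) :
    ZMod 2 × ZMod 2 × ZMod 2 × ZMod 2 × ZMod 2 :=
  (p.2.2.2.1 + 1, p.2.2.1 + 1, p.2.1 + 1, p.1 + 1,
    p.2.2.2.2 + p.2.2.1 + p.1 * p.2.2.1 + p.2.2.2.1 + p.2.1 * p.2.2.2.1)

theorem duality_on_B2_involution_and_fixed_points :
    (∀ p, DB (DB p) = p) ∧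
    (∀ p, DB p = p ↔ (p.2.2.1 = p.2.1 + 1 ∧ p.2.2.2.1 = p.1 + 1)) ∧
    Nat.card {p : ZMod 2 × ZMod 2 × ZMod 2 × ZMod 2 × ZMod 2 // DB p = p} = 8 := by
  refine ⟨by decide, by decide, ?_⟩
  rw [Nat.card_eq_fintype_card]
  decide
end

section
/- Let V = {(a1,a2,a13,a23,b1) ∈ F2^5 : a1*a2 + a1*a13 + a2*a13*a23 + a2*a13*b1 + a2*a13 + a2*a23 + a2*b1 + a2 + b1 = 0} and define D(a1,a2,a13,a23,b1) = (a23+1, a13+1, a2+1, a1+1, b1 + a13 + a2*a13 + a2*a23 + a13*a23 + b1*a13). Then D maps V into V, D∘D = id on V, and D has exactly 4 fixed points in V, namely (0,0,1,1,0), (1,0,1,0,1), (1,1,0,0,0) and (1,1,0,0,1). -/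
/-- The duality map on `(a1, a2, a13, a23, b1)`. -/
def Dsym (p : ZMod 2 × ZMod 2 × ZMod 2 × ZMod 2 × ZMod 2) :
    ZMod 2 × ZMod 2 × ZMod 2 × ZMod 2 × ZMod 2 :=
  (p.2.2.2.1 + 1, p.2.2.1 + 1, p.2.1 + 1, p.1 + 1,
    p.2.2.2.2 + p.2.2.1 + p.2.1 * p.2.2.1 + p.2.1 * p.2.2.2.1 +
      p.2.2.1 * p.2.2.2.1 + p.2.2.2.2 * p.2.2.1)

set_option synthInstance.maxSize 1000 in
theorem duality_on_symmetric_Sq8_actions :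
    (∀ p ∈ symV, Dsym p ∈ symV) ∧
    (∀ p ∈ symV, Dsym (Dsym p) = p) ∧
    {p ∈ symV | Dsym p = p} =
      {((0 : ZMod 2), (0 : ZMod 2), (1 : ZMod 2), (1 : ZMod 2), (0 : ZMod 2)),
       ((1 : ZMod 2), (0 : ZMod 2), (1 : ZMod 2), (0 : ZMod 2), (1 : ZMod 2)),
       ((1 : ZMod 2), (1 : ZMod 2), (0 : ZMod 2), (0 : ZMod 2), (0 : ZMod 2)),
       ((1 : ZMod 2), (1 : ZMod 2), (0 : ZMod 2), (0 : ZMod 2), (1 : ZMod 2))} := by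
  refine ⟨?_, ?_, ?_⟩
  · intro p hp
    obtain ⟨a,b,c,d,e⟩ := p
    revert hp
    simp only [symV, symRel, Dsym, Set.mem_setOf_eq]
    revert a b c d e; decide
  · intro p hp
    obtain ⟨a,b,c,d,e⟩ := p
    revert hp
    simp only [symV, symRel, Dsym, Set.mem_setOf_eq]
    revert a b c d e; decide
  · ext p
    obtain ⟨a,b,c,d,e⟩ := p
    simp only [symV, symRel, Dsym, Set.mem_setOf_eq, Set.mem_insert_iff, Set.mem_singleton_iff, Prod.mk.injEq]
    revert a b c d e; decide
end

section
/- For every (a1, a2, a13, a23, b1) in F2^5 satisfying a1*a2 + a1*a13 + a2*a13*a23 + a2*a13*b1 + a2*a13 + a2*a23 + a2*b1 + a2 + b1 = 0, both of the following hold: a2 + b1 + a1*a2 + a1*a13 + a2*a13 + a2*a23 + a2*a13*a23 + a2*b1 = 0, and a1*a13 + a1*a2*a13 + a13*b1 = 0. -/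
/-- The two `error terms` of `D^2` vanish on every `F2`-point of the variety of
symmetric `Sq^8` actions on `A(2)`. -/
theorem duality_error_terms_vanish :
    ∀ a1 a2 a13 a23 b1 : ZMod 2, symRel a1 a2 a13 a23 b1 = 0 →
      a2 + b1 + a1*a2 + a1*a13 + a2*a13 + a2*a23 + a2*a13*a23 + a2*b1 = 0 ∧
      a1*a13 + a1*a2*a13 + a13*b1 = 0 := by
  unfold symRel; decide
end

section
/- Let P = F2[x1, x2, x3] with ψ : P → F2[x1,x2,x3,y1,y2,y3] the F2-algebra map ψ(x1) = x1 + y1, ψ(x2) = x2 + x1^2*y1 + y2, ψ(x3) = x3 + x2^2*y1 + x1^4*y2 + y3, and χ : P → P the F2-algebra map with χ(x1) = x1, χ(x2) = x2 + x1^3, χ(x3) = x3 + x2*x1^2 + x2^2*x1 + x1^7. Let J' be the ideal of F2[x1,x2,x3,y1,y2,y3] generated by x1^8, x2, x3^2, y1^8, y2, y3^2. Then ψ(x1^7 * x3) is NOT congruent modulo J' to the sum over all (r1, r3) with 0 ≤ r1 ≤ 7 and 0 ≤ r3 ≤ 1 of χ(x1^{r1}*x3^{r3}) times y1^{7-r1}*y3^{1-r3}.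 -/
open MvPolynomial

/-- The Milnor coproduct `ψ` on `F2[ξ1,ξ2,ξ3]`, with the tensor product modeled by the
polynomial ring in six variables `x1,x2,x3,y1,y2,y3` (indices `0..5`). -/
noncomputable def psi3 : MvPolynomial (Fin 3) (ZMod 2) →ₐ[ZMod 2] MvPolynomial (Fin 6) (ZMod 2) :=
  aeval ![X 0 + X 3, X 1 + X 0 ^ 2 * X 3 + X 4, X 2 + X 1 ^ 2 * X 3 + X 0 ^ 4 * X 4 + X 5]

/-- The antipode `χ` on `F2[ξ1,ξ2,ξ3]`. -/
noncomputable def chi3 : MvPolynomial (Fin 3) (ZMod 2) →ₐ[ZMod 2] MvPolynomial (Fin 3) (ZMod 2) :=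
  aeval ![X 0, X 1 + X 0 ^ 3, X 2 + X 1 * X 0 ^ 2 + X 1 ^ 2 * X 0 + X 0 ^ 7]

/-- The inclusion `x_i ↦ x_i` of the three-variable ring into the six-variable ring. -/
noncomputable def incl3 : MvPolynomial (Fin 3) (ZMod 2) →ₐ[ZMod 2] MvPolynomial (Fin 6) (ZMod 2) :=
  aeval ![X 0, X 1, X 2]

/-- Cofactor of `X 0 ^ 8` in the explicit decomposition of the difference. -/
noncomputable def auxPA : MvPolynomial (Fin 6) (ZMod 2) := X 3 ^ 3 * X 4 + X 3 ^ 6 + X 1 * X 3 + X 1 ^ 2 + X 0 * X 3 ^ 2 * X 4 + X 0 * X 3 ^ 5 + X 0 * X 1 + X 0 ^ 2 * X 3 * X 4 + X 0 ^ 2 * X 3 ^ 4 + X 0 ^ 3 * X 4 + X 0 ^ 3 * X 3 ^ 3 + X 0 ^ 4 * X 3 ^ 2 + X 0 ^ 5 * X 3 + X 0 ^ 6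

/-- Cofactor of `X 1` in the explicit decomposition of the difference. -/
noncomputable def auxPB : MvPolynomial (Fin 6) (ZMod 2) := X 1 * X 3 ^ 8 + X 0 ^ 2 * X 3 ^ 7 + X 0 ^ 3 * X 3 ^ 6 + X 0 ^ 4 * X 3 ^ 5 + X 0 ^ 5 * X 3 ^ 4 + X 0 ^ 6 * X 3 ^ 3 + X 0 ^ 7 * X 3 ^ 2

/-- Cofactor of `X 4` in the explicit decomposition of the difference. -/
noncomputable def auxPC : MvPolynomial (Fin 6) (ZMod 2) := X 0 ^ 4 * X 3 ^ 7 + X 0 ^ 5 * X 3 ^ 6 + X 0 ^ 6 * X 3 ^ 5 + X 0 ^ 7 * X 3 ^ 4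

set_option maxHeartbeats 2000000 in
/-- Cofactor of `2` (the even part over `ℤ`) in the explicit decomposition. -/
noncomputable def auxPE : MvPolynomial (Fin 6) (ZMod 2) := 3 * X 0 * X 3 ^ 6 * X 5 + 3 * X 0 * X 2 * X 3 ^ 6 + 3 * X 0 * X 1 ^ 2 * X 3 ^ 7 + 10 * X 0 ^ 2 * X 3 ^ 5 * X 5 + 10 * X 0 ^ 2 * X 2 * X 3 ^ 5 - X 0 ^ 2 * X 1 * X 3 ^ 7 + 10 * X 0 ^ 2 * X 1 ^ 2 * X 3 ^ 6 + 17 * X 0 ^ 3 * X 3 ^ 4 * X 5 + 17 * X 0 ^ 3 * X 2 * X 3 ^ 4 - X 0 ^ 3 * X 1 * X 3 ^ 6 + 17 * X 0 ^ 3 * X 1 ^ 2 * X 3 ^ 5 + 17 * X 0 ^ 4 * X 3 ^ 3 * X 5 + 17 * X 0 ^ 4 * X 2 * X 3 ^ 3 - X 0 ^ 4 * X 1 * X 3 ^ 5 + 17 * X 0 ^ 4 * X 1 ^ 2 * X 3 ^ 4 + 10 * X 0 ^ 5 * X 3 ^ 2 * X 5 + 3 * X 0 ^ 5 * X 3 ^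 6 * X 4 + 10 * X 0 ^ 5 * X 2 * X 3 ^ 2 - X 0 ^ 5 * X 1 * X 3 ^ 4 + 10 * X 0 ^ 5 * X 1 ^ 2 * X 3 ^ 3 + 3 * X 0 ^ 6 * X 3 * X 5 + 10 * X 0 ^ 6 * X 3 ^ 5 * X 4 + 3 * X 0 ^ 6 * X 2 * X 3 - X 0 ^ 6 * X 1 * X 3 ^ 3 + 3 * X 0 ^ 6 * X 1 ^ 2 * X 3 ^ 2 + 17 * X 0 ^ 7 * X 3 ^ 4 * X 4 - X 0 ^ 7 * X 3 ^ 7 - X 0 ^ 7 * X 1 * X 3 ^ 2 + 17 * X 0 ^ 8 * X 3 ^ 3 * X 4 - X 0 ^ 8 * X 3 ^ 6 - X 0 ^ 8 * X 1 * X 3 - X 0 ^ 8 * X 1 ^ 2 + 10 * X 0 ^ 9 * X 3 ^ 2 * X 4 - X 0 ^ 9 * X 3 ^ 5 - X 0 ^ 9 * X 1 + 3 * X 0 ^ 10 * X 3 * X 4 - X 0 ^ 10 * X 3 ^ 4 - X 0 ^ 11 * X 3 ^ 3 - X 0 ^ 12 * X 3 ^ 2 - X 0 ^ 13 * X 3 -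 X 0 ^ 14

set_option maxHeartbeats 2000000 in
/-- Explicit decomposition of the difference appearing in the main theorem. -/
theorem aux_decomp : psi3 (X 0 ^ 7 * X 2) -
        (∑ r1 ∈ Finset.range 8, ∑ r3 ∈ Finset.range 2,
          incl3 (chi3 (X 0 ^ r1 * X 2 ^ r3)) * X 3 ^ (7 - r1) * X 5 ^ (1 - r3)) =
      X 0 ^ 7 * X 3 ^ 7 + X 0 ^ 8 * auxPA + X 1 * auxPB + X 4 * auxPC + 2 * auxPE := by
  simp only [psi3, chi3, incl3, auxPA, auxPB, auxPC, auxPE, map_mul, map_pow, map_add, aeval_X,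
    Finset.sum_range_succ, Finset.sum_range_zero, Matrix.cons_val_zero, Matrix.cons_val_one,
    Matrix.head_cons, Matrix.cons_val_two, Matrix.tail_cons, Matrix.cons_val_three,
    Matrix.cons_val_four, Matrix.cons_val']
  ring

/-- The duality identity fails for the invalid profile `(3, 0, 1)`. -/
theorem psi_top_class_fails_for_invalid_profile :
    ¬ (psi3 (X 0 ^ 7 * X 2) -
        (∑ r1 ∈ Finset.range 8, ∑ r3 ∈ Finset.range 2,
          incl3 (chi3 (X 0 ^ r1 * X 2 ^ r3)) * X 3 ^ (7 - r1) * X 5 ^ (1 - r3)) ∈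
      Ideal.span {(X 0 : MvPolynomial (Fin 6) (ZMod 2)) ^ 8, X 1, X 2 ^ 2,
        X 3 ^ 8, X 4, X 5 ^ 2}) := by
  intro h
  rw [aux_decomp] at h
  have h2 : (2 : MvPolynomial (Fin 6) (ZMod 2)) = 0 := by
    exact_mod_cast CharP.cast_eq_zero (MvPolynomial (Fin 6) (ZMod 2)) 2
  rw [h2, zero_mul, add_zero] at h
  -- the last three summands are visibly in the ideal
  have hI : X 0 ^ 8 * auxPA + X 1 * auxPB + X 4 * auxPC ∈
      Ideal.span {(X 0 : MvPolynomial (Fin 6) (ZMod 2)) ^ 8, X 1, X 2 ^ 2,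
        X 3 ^ 8, X 4, X 5 ^ 2} := by
    refine Ideal.add_mem _ (Ideal.add_mem _ ?_ ?_) ?_ <;>
      exact Ideal.mul_mem_right _ _ (Ideal.subset_span (by simp))
  have h7 : (X 0 ^ 7 * X 3 ^ 7 : MvPolynomial (Fin 6) (ZMod 2)) ∈
      Ideal.span {(X 0 : MvPolynomial (Fin 6) (ZMod 2)) ^ 8, X 1, X 2 ^ 2,
        X 3 ^ 8, X 4, X 5 ^ 2} := by
    have := Ideal.sub_mem _ h hI
    simpa using this
  -- rewrite the generating set as a set of monomials
  have hset : ({(X 0 : MvPolynomial (Fin 6) (ZMod 2)) ^ 8, X 1, X 2 ^ 2, X 3 ^ 8, X 4, X 5 ^ 2} :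
      Set (MvPolynomial (Fin 6) (ZMod 2))) =
      (fun s => monomial s (1 : ZMod 2)) '' {Finsupp.single 0 8, Finsupp.single 1 1,
        Finsupp.single 2 2, Finsupp.single 3 8, Finsupp.single 4 1, Finsupp.single 5 2} := by
    have e1 : (X 1 : MvPolynomial (Fin 6) (ZMod 2)) = monomial (Finsupp.single 1 1) 1 := by
      rw [← pow_one (X 1 : MvPolynomial (Fin 6) (ZMod 2)), X_pow_eq_monomial]
    have e4 : (X 4 : MvPolynomial (Fin 6) (ZMod 2)) = monomial (Finsupp.single 4 1) 1 := by
      rw [← pow_one (X 4 : MvPolynomial (Fin 6) (ZMod 2)), X_pow_eq_monomial]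
    simp only [Set.image_insert_eq, Set.image_singleton, X_pow_eq_monomial, e1, e4]
  rw [hset, mem_ideal_span_monomial_image] at h7
  have hsupp : (Finsupp.single 0 7 + Finsupp.single 3 7 : Fin 6 →₀ ℕ) ∈
      (X 0 ^ 7 * X 3 ^ 7 : MvPolynomial (Fin 6) (ZMod 2)).support := by
    rw [X_pow_eq_monomial, X_pow_eq_monomial, monomial_mul, one_mul, mem_support_iff,
      coeff_monomial]
    simp
  obtain ⟨si, hsi, hle⟩ := h7 _ hsupp
  have hle' := Finsupp.le_def.mp hle
  simp only [Set.mem_insert_iff, Set.mem_singleton_iff] at hsi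
  rcases hsi with rfl|rfl|rfl|rfl|rfl|rfl
  · have := hle' 0; simp [Finsupp.single_apply] at this
  · have := hle' 1; simp [Finsupp.single_apply] at this
  · have := hle' 2; simp [Finsupp.single_apply] at this
  · have := hle' 3; simp [Finsupp.single_apply] at this
  · have := hle' 4; simp [Finsupp.single_apply] at this
  · have := hle' 5; simp [Finsupp.single_apply] at this
end
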